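/- arXiv:2209.09293 — 2 statements merged into one kernel-verified Lean document; each statement's English description precedes it below -/
import Mathlib

section
/- Let X be a countably infinite set and let E be any set function on finite subsets of X. If the lexicographic composition L_E preserves path independence over the class C^res of responsive choice functions, then R_E is K-disjoint on Dom(R_E): for every Z ∈ Dom(R_E), R_E(Z) ∩ E(∅) = ∅. -/
/-! Common definitions: choice functions on a countably infinite set of items,
lexicographic composition subject to an exclusion function, and the various
properties from the paper. Items form a type `X`; finite subsets of `X` are
`Finset X`; set functions are maps `Finset X → Set X`. -/

open scoped Classical

variable {X : Type*}

/-- A choice function selects a subset of its input. -/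
def IsChoice (C : Finset X → Finset X) : Prop := ∀ Y, C Y ⊆ Y

/-- Lexicographic composition of `C1` and `C2` subject to the exclusion
function `E`:  `Y ↦ C1(Y) ∪ C2(Y \ E(C1(Y)))`. -/
noncomputable def lexComp (E : Finset X → Set X) (C1 C2 : Finset X → Finset X) :
    Finset X → Finset X :=
  fun Y => C1 Y ∪ C2 (Y.filter (fun y => y ∉ E (C1 Y)))

/-- Path independence: `C(Y ∪ Y') = C(C(Y) ∪ C(Y'))`. -/
def PathIndependent (C : Finset X → Finset X) : Prop :=
  ∀ Y Y' : Finset X, C (Y ∪ Y') = C (C Y ∪ C Y')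

/-- Substitutes: the rejection function is monotone. -/
def Substitutes (C : Finset X → Finset X) : Prop :=
  ∀ Y Y' : Finset X, Y ⊆ Y' → Y \ C Y ⊆ Y' \ C Y'

/-- Size monotonicity (law of aggregate demand). -/
def SizeMonotonic (C : Finset X → Finset X) : Prop :=
  ∀ Y Y' : Finset X, Y ⊆ Y' → (C Y).card ≤ (C Y').card

/-- Consistency: `C(Y') ⊆ Y ⊆ Y'` implies `C(Y) = C(Y')`. -/
def Consistent (C : Finset X → Finset X) : Prop :=
  ∀ Y Y' : Finset X, C Y' ⊆ Y → Y ⊆ Y' → C Y = C Y'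

/-- The `q` highest-ranked acceptable elements of `Y`, with respect to a linear
order `r` on `X ∪ {∅}` (modelled as `Option X`, `none` playing the role of the
outside option `∅`): `y` is chosen iff `y ≻ ∅` and fewer than `q` acceptable
elements of `Y` are ranked strictly above `y`. -/
noncomputable def topChoice (r : LinearOrder (Option X)) (q : ℕ) (Y : Finset X) : Finset X :=
  Y.filter (fun y => r.lt none (some y) ∧
    (Y.filter (fun z => r.lt none (some z) ∧ r.lt (some y) (some z))).card < q)

/-- `C` is responsive to the linear order `r` on `X ∪ {∅}` and quota `q`. -/
def ResponsiveWith (r : LinearOrder (Option X)) (q : ℕ) (C : Finset X → Finset X) : Prop :=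
  ∀ Y : Finset X, C Y = topChoice r q Y

/-- Responsive choice functions (the class `C^res`). -/
def Responsive (C : Finset X → Finset X) : Prop :=
  ∃ (r : LinearOrder (Option X)) (q : ℕ), ResponsiveWith r q C

/-- Single-valued responsive choice functions (the class `C^{sv-res}`): quota 1. -/
def SVResponsive (C : Finset X → Finset X) : Prop :=
  ∃ r : LinearOrder (Option X), ResponsiveWith r 1 C

/-- `E` is threshold-linear with cardinal reuse with respect to the parameters
`t ∈ ℕ ∪ {0,∞}`, `K ⊆ X` and the chain `∅ = T^0 ⊆ T^1 ⊆ ⋯ ⊆ T^t ⊆ X \ K`: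
for every finite `Z`, if `|Z| < t` then `E(Z) = (Z \ T^{|Z|}) ∪ K`, and
otherwise `G_E(Z) = E(Z) ∪ Z = X`. -/
def TLCRWith (E : Finset X → Set X) (t : ℕ∞) (K : Set X) (T : ℕ → Set X) : Prop :=
  T 0 = ∅ ∧ (∀ n : ℕ, (n : ℕ∞) < t → T n ⊆ T (n + 1)) ∧
  (∀ n : ℕ, (n : ℕ∞) ≤ t → T n ⊆ Kᶜ) ∧
  ∀ Z : Finset X,
    ((Z.card : ℕ∞) < t → E Z = ((Z : Set X) \ T Z.card) ∪ K) ∧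
    (¬ (Z.card : ℕ∞) < t → E Z ∪ (Z : Set X) = Set.univ)

/-- `E` is threshold-linear with cardinal reuse (for some parameters). -/
def TLCR (E : Finset X → Set X) : Prop :=
  ∃ (t : ℕ∞) (K : Set X) (T : ℕ → Set X), TLCRWith E t K T

/-- A dilation `D` is threshold-linear (with threshold `t`), where `K = D(∅)`:
`D(Z) = Z ∪ K` when `|Z| < t`, and `D(Z) = X` otherwise. -/
def ThresholdLinear (D : Finset X → Set X) : Prop :=
  ∃ t : ℕ∞, ∀ Z : Finset X,
    ((Z.card : ℕ∞) < t → D Z = (Z : Set X) ∪ D ∅) ∧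
    (¬ (Z.card : ℕ∞) < t → D Z = Set.univ)

/-- A set function `F` (valued inside its argument) is cardinal-linear:
there is a weakly increasing sequence `∅ = T^0 ⊆ T^1 ⊆ ⋯` with
`F(Z) = Z ∩ T^{|Z|}` for every finite `Z`. -/
def CardinalLinear (F : Finset X → Set X) : Prop :=
  ∃ T : ℕ → Set X, T 0 = ∅ ∧ Monotone T ∧
    ∀ Z : Finset X, F Z = (Z : Set X) ∩ T Z.card

section Equiv

variable (s : Setoid X)

/-- A finite set is feasible if it contains at most one element of each
equivalence class. -/
def Feasible (Z : Finset X) : Prop :=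
  ∀ x ∈ Z, ∀ z ∈ Z, x ≠ z → ¬ s.r x z

/-- A choice function is many-to-one if it always selects a feasible set. -/
def ManyToOne (C : Finset X → Finset X) : Prop :=
  ∀ Y : Finset X, Feasible s (C Y)

/-- `I_Z`: the union of the equivalence classes of the members of `Z`. -/
def IClass (Z : Finset X) : Set X := {y | ∃ x ∈ Z, s.r y x}

/-- `E` is equivalence-excluding: `Z ∪ E(Z) ⊇ I_Z` for every feasible `Z`. -/
def EquivExcluding (E : Finset X → Set X) : Prop :=
  ∀ Z : Finset X, Feasible s Z → IClass s Z ⊆ (Z : Set X) ∪ E Z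

/-- `Cbar` completes `C`: whenever `Cbar(Y)` is feasible, `Cbar(Y) = C(Y)`. -/
def Completes (Cbar C : Finset X → Finset X) : Prop :=
  ∀ Y : Finset X, Feasible s (Cbar Y) → Cbar Y = C Y

/-- `E` is many-to-one threshold-linear with cardinal reuse with the parameters
`t`, `K`, `{T^n}`: the displayed condition holds for every *feasible* `Z`:
if `Z ∪ K ≠ X` and `|Z| < t` then `E(Z) = (Z \ T^{|Z|}) ∪ K`, and otherwise
`G_E(Z) = X`. -/
def MtoTLCRWith (E : Finset X → Set X) (t : ℕ∞) (K : Set X) (T : ℕ → Set X) : Prop :=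
  T 0 = ∅ ∧ (∀ n : ℕ, (n : ℕ∞) < t → T n ⊆ T (n + 1)) ∧
  (∀ n : ℕ, (n : ℕ∞) ≤ t → T n ⊆ Kᶜ) ∧
  ∀ Z : Finset X, Feasible s Z →
    (((Z : Set X) ∪ K ≠ Set.univ ∧ (Z.card : ℕ∞) < t) →
      E Z = ((Z : Set X) \ T Z.card) ∪ K) ∧
    (¬ ((Z : Set X) ∪ K ≠ Set.univ ∧ (Z.card : ℕ∞) < t) →
      E Z ∪ (Z : Set X) = Set.univ)

end Equiv

/-
Suppose `x ∈ Z \ E(Z)` lies in `K = E(∅)`; pick `w ∉ E(Z) ∪ Z` and a fresh item `v`, and put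
`T = Z - x + v`. For a path-independent choice function, `C(Y ∪ Y') = C(C(Y) ∪ C(Y'))` gives
`C(Y ∪ Y') ⊆ C(Y) ∪ C(Y')`, so an item chosen from `Y ∪ Y'` but from neither `Y` nor `Y'` is a
contradiction. Feeding `L_E` responsive choice functions that rank a block of items on top and
fill their quota with it, this forces in turn `x ∈ E(T)` (as `x ∈ K`), `w ∈ E(T)` (as
`x ∉ E(Z)`), and finally `w ∈ E(Z)`, against the choice of `w`.
-/

open Finset

theorem IsChoice.lexComp {E : Finset X → Set X} {C1 C2 : Finset X → Finset X}
    (h1 : IsChoice C1) (h2 : IsChoice C2) : IsChoice (lexComp E C1 C2) :=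
  fun Y => union_subset (h1 Y) ((h2 _).trans (filter_subset _ Y))

theorem PathIndependent.mem_or_mem_of_mem_union {C : Finset X → Finset X}
    (hpi : PathIndependent C) (hC : IsChoice C) {Y Y' : Finset X} {y : X}
    (hy : y ∈ C (Y ∪ Y')) : y ∈ C Y ∨ y ∈ C Y' := by
  rw [hpi] at hy
  exact mem_union.mp (hC _ hy)

theorem Responsive.isChoice {C : Finset X → Finset X} (hC : Responsive C) : IsChoice C := by
  obtain ⟨r, q, hrq⟩ := hC
  intro Y
  rw [hrq]
  exact filter_subset _ _

section TopChoice

variable (r : LinearOrder (Option X)) (q : ℕ)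

theorem responsive_topChoice : Responsive (topChoice r q) :=
  ⟨r, q, fun _ => rfl⟩

theorem topChoice_eq_filter_of_card_le {Y : Finset X}
    (hY : (Y.filter fun y => r.lt none (some y)).card ≤ q) :
    topChoice r q Y = Y.filter fun y => r.lt none (some y) := by
  let _ := r
  refine filter_congr fun y hy => and_iff_left_of_imp fun hacc => hY.trans_lt' ?_
  refine card_lt_card ⟨fun z hz => ?_, fun h => ?_⟩
  · exact mem_filter.mpr ⟨(mem_filter.mp hz).1, (mem_filter.mp hz).2.1⟩
  · exact lt_irrefl (some y) (mem_filter.mp (h (mem_filter.mpr ⟨hy, hacc⟩))).2.2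

theorem topChoice_eq_of_forall_lt {Y A : Finset X} (hAY : A ⊆ Y) (hA : A.card = q)
    (hacc : ∀ a ∈ A, r.lt none (some a))
    (htop : ∀ a ∈ A, ∀ y ∈ Y, y ∉ A → r.lt (some y) (some a)) :
    topChoice r q Y = A := by
  let _ := r
  ext y
  simp only [topChoice, mem_filter]
  constructor
  · rintro ⟨hy, hyacc, hcard⟩
    by_contra hyA
    refine hcard.not_ge (hA ▸ card_le_card fun a ha => ?_)
    exact mem_filter.mpr ⟨hAY ha, hacc a ha, htop a ha y hy hyA⟩
  · intro hyA
    refine ⟨hAY hyA, hacc y hyA, hA ▸ card_lt_card ⟨fun z hz => ?_, fun h => ?_⟩⟩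
    · obtain ⟨hzY, -, hyz⟩ := mem_filter.mp hz
      by_contra hzA
      exact (htop y hyA z hzY hzA).not_gt hyz
    · exact lt_irrefl (some y) (mem_filter.mp (h hyA)).2.2

end TopChoice

/-- `none` sits just below rank `1`; ties between items of equal rank are broken by a
well-order of `X`. -/
noncomputable abbrev rankOrder (rk : X → ℕ) : LinearOrder (Option X) :=
  letI : LinearOrder X := IsWellOrder.linearOrder WellOrderingRel
  LinearOrder.lift' (fun o => toLex (o.elim (1, ⊥) fun a => (rk a, (a : WithBot X)))) <| by
    rintro (_ | a) (_ | b) h <;> simp_all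

theorem rankOrder_none_lt_some (rk : X → ℕ) (y : X) :
    (rankOrder rk).lt none (some y) ↔ 0 < rk y := by
  let _ : LinearOrder X := IsWellOrder.linearOrder WellOrderingRel
  show toLex ((1 : ℕ), (⊥ : WithBot X)) < toLex (rk y, (y : WithBot X)) ↔ _
  simp [Prod.Lex.toLex_lt_toLex, WithBot.bot_lt_coe]
  omega

theorem rankOrder_some_lt_some_of_lt (rk : X → ℕ) {y z : X} (h : rk y < rk z) :
    (rankOrder rk).lt (some y) (some z) := by
  let _ : LinearOrder X := IsWellOrder.linearOrder WellOrderingRel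
  show toLex (rk y, (y : WithBot X)) < toLex (rk z, (z : WithBot X))
  exact Prod.Lex.toLex_lt_toLex.mpr (Or.inl h)

noncomputable def traceChoice (T : Finset X) : Finset X → Finset X :=
  topChoice (rankOrder fun y => if y ∈ T then 1 else 0) T.card

noncomputable def blockChoice (T : Finset X) (s : X) : Finset X → Finset X :=
  topChoice (rankOrder fun y => if y ∈ T then 2 else if y = s then 1 else 0) T.card

theorem traceChoice_apply (T Y : Finset X) : traceChoice T Y = Y ∩ T := by
  have hacc : (Y.filter fun y => (rankOrder fun y => if y ∈ T then 1 else 0).lt none (some y))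
      = Y ∩ T := by
    ext y
    by_cases hyT : y ∈ T <;> simp [rankOrder_none_lt_some, hyT]
  rw [traceChoice, topChoice_eq_filter_of_card_le _ _ (hacc ▸ card_le_card inter_subset_right),
    hacc]

theorem blockChoice_of_subset {T Y : Finset X} (s : X) (hTY : T ⊆ Y) : blockChoice T s Y = T :=
  topChoice_eq_of_forall_lt _ _ hTY rfl
    (fun a ha => (rankOrder_none_lt_some _ a).mpr (by simp [ha]))
    (fun a ha y _ hy => rankOrder_some_lt_some_of_lt _ (by split_ifs <;> simp_all))

theorem blockChoice_of_not_subset {T Y : Finset X} (s : X) (hTY : ¬T ⊆ Y) :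
    blockChoice T s Y = Y ∩ insert s T := by
  have hacc : (Y.filter fun y => (rankOrder fun y => if y ∈ T then 2 else if y = s then 1 else 0).lt
      none (some y)) = Y ∩ insert s T := by
    ext y
    by_cases hyT : y ∈ T <;> by_cases hys : y = s <;> simp_all [rankOrder_none_lt_some]
  have hcard : (Y ∩ insert s T).card ≤ T.card :=
    calc (Y ∩ insert s T).card ≤ (insert s (Y ∩ T)).card := by
          refine card_le_card fun y hy => ?_
          simp only [mem_inter, mem_insert] at hy ⊢
          tauto
      _ ≤ (Y ∩ T).card + 1 := card_insert_le _ _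
      _ ≤ T.card := card_lt_card ⟨inter_subset_right, fun h => hTY (h.trans inter_subset_left)⟩
  rw [blockChoice, topChoice_eq_filter_of_card_le _ _ (hacc ▸ hcard), hacc]

theorem responsive_traceChoice (T : Finset X) : Responsive (traceChoice T) :=
  responsive_topChoice _ _

theorem responsive_blockChoice (T : Finset X) (s : X) : Responsive (blockChoice T s) :=
  responsive_topChoice _ _

section Preservation

variable {E : Finset X → Set X}

theorem mem_lexComp {C1 C2 : Finset X → Finset X} {Y : Finset X} {y : X} :
    y ∈ lexComp E C1 C2 Y ↔ y ∈ C1 Y ∨ y ∈ C2 (Y.filter fun z => z ∉ E (C1 Y)) :=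
  mem_union

def PreservesPI (E : Finset X → Set X) : Prop :=
  ∀ C1 C2 : Finset X → Finset X, IsChoice C1 → IsChoice C2 →
    Responsive C1 → Responsive C2 → PathIndependent (lexComp E C1 C2)

theorem PreservesPI.mem_of_mem_union_of_notMem (hE : PreservesPI E)
    {C1 C2 : Finset X → Finset X} (h1 : Responsive C1) (h2 : Responsive C2) {Y Y' : Finset X}
    {y : X} (hy : y ∈ lexComp E C1 C2 (Y ∪ Y')) (hyY : y ∉ Y) : y ∈ lexComp E C1 C2 Y' :=
  have hL := h1.isChoice.lexComp (E := E) h2.isChoice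
  ((hE C1 C2 h1.isChoice h2.isChoice h1 h2).mem_or_mem_of_mem_union hL hy).resolve_left
    fun h => hyY (hL Y h)

theorem PreservesPI.mem_of_mem_empty (hE : PreservesPI E) {x : X} (hxK : x ∈ E ∅)
    {W : Finset X} (hxW : x ∉ W) : x ∈ E W := by
  by_contra hxEW
  have h := hE.mem_of_mem_union_of_notMem (responsive_traceChoice W)
    (responsive_traceChoice {x}) (Y' := {x}) ?_ hxW
  · simp [mem_lexComp, traceChoice_apply, singleton_inter_of_notMem hxW, hxK] at h
  · simp [mem_lexComp, traceChoice_apply, insert_inter_of_notMem hxW, hxEW]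

theorem PreservesPI.mem_exchange_of_mem_empty (hE : PreservesPI E) {x w v : X} {Z : Finset X}
    (hxK : x ∈ E ∅) (hxZ : x ∈ Z) (hxE : x ∉ E Z) (hwZ : w ∉ Z) (hvZ : v ∉ Z) (hvw : v ≠ w) :
    w ∈ E (insert v (Z.erase x)) := by
  set T := insert v (Z.erase x)
  have hxT : x ∉ T := by
    simp only [T, mem_insert, mem_erase, not_or]
    exact ⟨ne_of_mem_of_not_mem hxZ hvZ, by simp⟩
  have hxET : x ∈ E T := hE.mem_of_mem_empty hxK hxT
  by_contra hwET
  -- `L_E` for `C1 = T ≻ x` and `C2 = x ≻ w` picks `w` from `Z + v + w` but not from `Z + w`,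
  -- where `C1` returns `Z` and `C2` then returns `x`.
  have hC1 : blockChoice T x (insert w Z) = Z := by
    rw [blockChoice_of_not_subset]
    · ext y
      simp only [T, mem_inter, mem_insert, mem_erase]
      grind
    · exact fun h => by simpa [hvw, hvZ] using h (mem_insert_self v _)
  have hC1' : blockChoice T x ({v} ∪ insert w Z) = T := by
    apply blockChoice_of_subset
    intro y
    simp only [T, mem_union, mem_insert, mem_erase, mem_singleton]
    grind
  have h := hE.mem_of_mem_union_of_notMem (responsive_blockChoice T x)
    (responsive_blockChoice {x} w) (Y := {v}) (Y' := insert w Z) ?_ (by simpa using hvw.symm)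
  · rw [mem_lexComp, hC1, blockChoice_of_subset] at h
    · simp [hwZ, (ne_of_mem_of_not_mem hxZ hwZ).symm] at h
    · simp [hxZ, hxE]
  · rw [mem_lexComp, hC1', blockChoice_of_not_subset]
    · simp [hwET]
    · simp [hxET]

theorem PreservesPI.mem_of_mem_exchange (hE : PreservesPI E) {x w v : X} {Z : Finset X}
    (hxZ : x ∈ Z) (hwZ : w ∉ Z) (hvZ : v ∉ Z) (hvw : v ≠ w)
    (hwT : w ∈ E (insert v (Z.erase x))) : w ∈ E Z := by
  set T := insert v (Z.erase x)
  by_contra hwEZ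
  -- `L_E` for `C1 = Z ≻ v` and `C2 = w` picks `w` from `Z + v + w` but not from `T + w`,
  -- where `C1` returns `T` and `w ∈ E(T)` blocks `C2`.
  have hC1 : blockChoice Z v (insert w T) = T := by
    rw [blockChoice_of_not_subset]
    · ext y
      simp only [T, mem_inter, mem_insert, mem_erase]
      grind
    · exact fun h => by
        simpa [T, ne_of_mem_of_not_mem hxZ hwZ, ne_of_mem_of_not_mem hxZ hvZ] using h hxZ
  have h := hE.mem_of_mem_union_of_notMem (responsive_blockChoice Z v)
    (responsive_traceChoice {w}) (Y := {x}) (Y' := insert w T) ?_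
    (by simpa using (ne_of_mem_of_not_mem hxZ hwZ).symm)
  · rw [mem_lexComp, hC1, traceChoice_apply] at h
    simp [T, hwT, hvw.symm, hwZ] at h
  · rw [mem_lexComp, blockChoice_of_subset, traceChoice_apply]
    · simp [hwEZ]
    · intro y
      simp only [T, mem_union, mem_insert, mem_erase, mem_singleton]
      grind

end Preservation

theorem preserving_pi_K_disjoint_general
    {X : Type*} [Infinite X] (E : Finset X → Set X)
    (hpres : ∀ C1 C2 : Finset X → Finset X, IsChoice C1 → IsChoice C2 →
      Responsive C1 → Responsive C2 → PathIndependent (lexComp E C1 C2)) :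
    ∀ Z : Finset X, E Z ∪ (Z : Set X) ≠ Set.univ →
      ((Z : Set X) \ E Z) ∩ E ∅ = ∅ := by
  have hE : PreservesPI E := hpres
  intro Z hZ
  refine Set.eq_empty_of_forall_notMem fun x ⟨⟨hxZ, hxE⟩, hxK⟩ => ?_
  obtain ⟨w, hw⟩ := (Set.ne_univ_iff_exists_notMem _).mp hZ
  rw [Set.mem_union, not_or, mem_coe] at hw
  obtain ⟨v, hv⟩ := Infinite.exists_notMem_finset (insert w Z)
  rw [mem_insert, not_or] at hv
  exact hw.1 <| hE.mem_of_mem_exchange hxZ hw.2 hv.2 hv.1 <|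
    hE.mem_exchange_of_mem_empty hxK hxZ hxE hw.2 hv.2 hv.1

/-- **Claim (K-disjointness).** If `L_E` preserves path independence over
responsive choice functions, then `R_E` is `K`-disjoint on `Dom(R_E)`:
for every finite `Z` with `G_E(Z) = E(Z) ∪ Z ≠ X`, `(Z \ E(Z)) ∩ E(∅) = ∅`. -/
theorem preserving_pi_K_disjoint
    {X : Type*} [Countable X] [Infinite X] (E : Finset X → Set X)
    (hpres : ∀ C1 C2 : Finset X → Finset X, IsChoice C1 → IsChoice C2 →
      Responsive C1 → Responsive C2 → PathIndependent (lexComp E C1 C2)) :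
    ∀ Z : Finset X, E Z ∪ (Z : Set X) ≠ Set.univ →
      ((Z : Set X) \ E Z) ∩ E ∅ = ∅ :=
  preserving_pi_K_disjoint_general E hpres
end

section
/- Let X be a countably infinite set with an equivalence relation ~ having countably many classes, and let E be a set function on finite subsets of X. If the lexicographic composition L_E preserves many-to-oneness and path independent completability over the class C^{mto1-res} of many-to-one responsive choice functions (i.e., for all many-to-one responsive C1, C2, the choice function L_E(C1,C2) is many-to-one and admits a path independent completion), then G_E is many-to-one monotonic: for all Z, Z' ∈ [X]*_F with Z ⊆ Z', G_E(Z) ⊆ G_E(Z'). -/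
/-! Common definitions: choice functions on a countably infinite set of items,
lexicographic composition subject to an exclusion function, and the various
properties from the paper. Items form a type `X`; finite subsets of `X` are
`Finset X`; set functions are maps `Finset X → Set X`. -/

open scoped Classical

variable {X : Type*}

section Aux

variable {X : Type*}

/-- Build a linear order on `Option X` in which `none` sits strictly below
exactly the elements of `A`. -/
lemma exists_order_with_acceptables [Countable X] (A : Set X) :
    ∃ r : LinearOrder (Option X), ∀ y : X, r.lt none (some y) ↔ y ∈ A := by
  classical
  obtain ⟨f, hf⟩ : ∃ f : X → ℕ, Function.Injective f := exists_injective_nat X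
  set g : Option X → ℤ := fun o => match o with
    | none => 0
    | some y => if y ∈ A then (f y : ℤ) + 1 else -((f y : ℤ) + 1) with hg_def
  have hgsome : ∀ y : X, g (some y) ≠ 0 := by
    intro y
    simp only [hg_def]
    split_ifs <;> omega
  have hg : Function.Injective g := by
    intro a b hab
    match a, b with
    | none, none => rfl
    | none, some y => exact absurd hab.symm (hgsome y)
    | some y, none => exact absurd hab (hgsome y)
    | some y, some z =>
      simp only [hg_def] at hab
      have : f y = f z := by split_ifs at hab <;> omega
      exact congrArg some (hf this)
  refine ⟨LinearOrder.lift' g hg, fun y => ?_⟩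
  show g none < g (some y) ↔ y ∈ A
  simp only [hg_def]
  split_ifs with h <;> simp only [h, iff_true, iff_false] <;> omega

lemma topChoice_eq_inter (r : LinearOrder (Option X)) (A : Finset X)
    (hA : ∀ y : X, r.lt none (some y) ↔ y ∈ A) (Y : Finset X) :
    topChoice r A.card Y = Y ∩ A := by
  classical
  letI := r
  ext y
  simp only [topChoice, Finset.mem_filter, Finset.mem_inter, hA]
  constructor
  · rintro ⟨hy, hyA, -⟩; exact ⟨hy, hyA⟩
  · rintro ⟨hy, hyA⟩
    refine ⟨hy, hyA, ?_⟩
    have hsub : (Y.filter (fun z => z ∈ A ∧ r.lt (some y) (some z)))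
        ⊆ A.erase y := by
      intro z hz
      simp only [Finset.mem_filter] at hz
      refine Finset.mem_erase.2 ⟨?_, hz.2.1⟩
      rintro rfl
      exact lt_irrefl _ hz.2.2
    calc (Y.filter (fun z => z ∈ A ∧ r.lt (some y) (some z))).card
        ≤ (A.erase y).card := Finset.card_le_card hsub
      _ < A.card := Finset.card_erase_lt_of_mem hyA

lemma topChoice_eq_single (r : LinearOrder (Option X)) (x : X)
    (hA : ∀ y : X, r.lt none (some y) ↔ y = x) (Y : Finset X) :
    topChoice r 1 Y = Y.filter (fun y => y = x) := by
  classical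
  letI := r
  ext y
  simp only [topChoice, Finset.mem_filter, hA]
  constructor
  · rintro ⟨hy, h1, -⟩; exact ⟨hy, h1⟩
  · rintro ⟨hy, rfl⟩
    refine ⟨hy, rfl, ?_⟩
    have hempty : (Y.filter (fun z => z = y ∧ r.lt (some y) (some z))) = ∅ := by
      ext z
      simp only [Finset.mem_filter, Finset.notMem_empty, iff_false, not_and]
      rintro - rfl h
      exact lt_irrefl _ h
    simp [hempty]

lemma Feasible.mono {s : Setoid X} {Z Z' : Finset X} (h : Feasible s Z')
    (hZ : Z ⊆ Z') : Feasible s Z :=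
  fun a ha b hb hab => h a (hZ ha) b (hZ hb) hab

lemma feasible_filter_eq {s : Setoid X} (Y : Finset X) (x : X) :
    Feasible s (Y.filter (fun y => y = x)) := by
  classical
  intro a ha b hb hab
  simp only [Finset.mem_filter] at ha hb
  exact absurd (ha.2.trans hb.2.symm) hab

end Aux

/-- **Claim (many-to-one monotonicity).** If `L_E` preserves many-to-oneness
and path independent completability over many-to-one responsive choice
functions, then `G_E` is many-to-one monotonic: for feasible `Z ⊆ Z'`,
`G_E(Z) ⊆ G_E(Z')`. -/
theorem preserving_pi_completability_mto_monotonic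
    {X : Type*} [Countable X] [Infinite X] (s : Setoid X)
    [Countable (Quotient s)] (E : Finset X → Set X)
    (hpres : ∀ C1 C2 : Finset X → Finset X, IsChoice C1 → IsChoice C2 →
      ManyToOne s C1 → ManyToOne s C2 → Responsive C1 → Responsive C2 →
      ManyToOne s (lexComp E C1 C2) ∧
        ∃ Cbar : Finset X → Finset X, IsChoice Cbar ∧ PathIndependent Cbar ∧
          Completes s Cbar (lexComp E C1 C2)) :
    ∀ Z Z' : Finset X, Feasible s Z → Feasible s Z' → Z ⊆ Z' →
      E Z ∪ (Z : Set X) ⊆ E Z' ∪ (Z' : Set X) := by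
  
  classical
  intro Z Z' hZf hZ'f hsub x hx
  by_contra hx'
  simp only [Set.mem_union, not_or] at hx'
  obtain ⟨hxE', hxZ'c⟩ := hx'
  have hxZ' : x ∉ Z' := fun h => hxZ'c (Finset.mem_coe.2 h)
  have hxZ : x ∉ Z := fun h => hxZ' (hsub h)
  have hxE : x ∈ E Z := by
    rcases hx with h | h
    · exact h
    · exact absurd (Finset.mem_coe.1 h) hxZ
  obtain ⟨r1, hr1⟩ := exists_order_with_acceptables (X := X) (Z' : Set X)
  obtain ⟨r2, hr2⟩ := exists_order_with_acceptables (X := X) {x}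
  set C1 : Finset X → Finset X := topChoice r1 Z'.card with hC1def
  set C2 : Finset X → Finset X := topChoice r2 1 with hC2def
  have hC1 : ∀ Y, C1 Y = Y ∩ Z' :=
    topChoice_eq_inter r1 Z' (fun y => by simpa using hr1 y)
  have hC2 : ∀ Y, C2 Y = Y.filter (fun y => y = x) :=
    topChoice_eq_single r2 x (fun y => by simpa using hr2 y)
  have hCh1 : IsChoice C1 := fun Y => (hC1 Y) ▸ Finset.inter_subset_left
  have hCh2 : IsChoice C2 := fun Y => (hC2 Y) ▸ Finset.filter_subset _ _
  have hM1 : ManyToOne s C1 := fun Y =>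
    Feasible.mono hZ'f ((hC1 Y) ▸ Finset.inter_subset_right)
  have hM2 : ManyToOne s C2 := fun Y => (hC2 Y) ▸ feasible_filter_eq Y x
  have hR1 : Responsive C1 := ⟨r1, Z'.card, fun Y => rfl⟩
  have hR2 : Responsive C2 := ⟨r2, 1, fun Y => rfl⟩
  obtain ⟨hmto, Cbar, hCbarCh, hPI, hComp⟩ :=
    hpres C1 C2 hCh1 hCh2 hM1 hM2 hR1 hR2
  -- compute the three relevant values of the lexicographic composition
  have e1 : (insert x Z) ∩ Z' = Z := by
    ext y
    simp only [Finset.mem_inter, Finset.mem_insert]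
    constructor
    · rintro ⟨rfl | h, hy'⟩
      · exact absurd hy' hxZ'
      · exact h
    · intro h; exact ⟨Or.inr h, hsub h⟩
  have e2 : (insert x Z') ∩ Z' = Z' := by
    ext y
    simp only [Finset.mem_inter, Finset.mem_insert]
    constructor
    · rintro ⟨rfl | h, hy'⟩ <;> assumption
    · intro h; exact ⟨Or.inr h, h⟩
  have hL1 : lexComp E C1 C2 (insert x Z) = Z := by
    unfold lexComp
    rw [hC1, e1, hC2]
    have hempty : (((insert x Z).filter (fun y => y ∉ E Z)).filter (fun y => y = x)) = ∅ := by
      ext y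
      simp only [Finset.mem_filter, Finset.notMem_empty, iff_false, not_and]
      rintro ⟨-, hnE⟩ rfl
      exact hnE hxE
    rw [hempty, Finset.union_empty]
  have hL2 : lexComp E C1 C2 (insert x Z') = insert x Z' := by
    unfold lexComp
    rw [hC1, e2, hC2]
    have hsing : (((insert x Z').filter (fun y => y ∉ E Z')).filter (fun y => y = x)) = {x} := by
      ext y
      simp only [Finset.mem_filter, Finset.mem_insert, Finset.mem_singleton]
      constructor
      · rintro ⟨-, rfl⟩; rfl
      · rintro rfl; exact ⟨⟨Or.inl rfl, hxE'⟩, rfl⟩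
    rw [hsing]
    ext y
    simp only [Finset.mem_union, Finset.mem_singleton, Finset.mem_insert, or_comm]
  have hL3 : lexComp E C1 C2 Z' = Z' := by
    unfold lexComp
    rw [hC1, Finset.inter_self, hC2]
    have hempty : ((Z'.filter (fun y => y ∉ E Z')).filter (fun y => y = x)) = ∅ := by
      ext y
      simp only [Finset.mem_filter, Finset.notMem_empty, iff_false, not_and]
      rintro ⟨hy, -⟩ rfl
      exact hxZ' hy
    rw [hempty, Finset.union_empty]
  -- feasibility of the relevant sets
  have hfeas2 : Feasible s (insert x Z') := hL2 ▸ hmto (insert x Z')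
  have hfeas1 : Feasible s (insert x Z) :=
    Feasible.mono hfeas2 (Finset.insert_subset_insert x hsub)
  have key : ∀ Y, Feasible s Y → Cbar Y = lexComp E C1 C2 Y :=
    fun Y hY => hComp Y (Feasible.mono hY (hCbarCh Y))
  -- path independence yields the contradiction
  have hpi := hPI (insert x Z) Z'
  have eU : (insert x Z) ∪ Z' = insert x Z' := by
    rw [Finset.insert_union, Finset.union_eq_right.2 hsub]
  rw [eU, key _ hfeas2, hL2, key _ hfeas1, hL1, key _ hZ'f, hL3,
    Finset.union_eq_right.2 hsub, key _ hZ'f, hL3] at hpi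
  exact hxZ' (hpi ▸ Finset.mem_insert_self x Z')
end
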